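/- Suppose φ₁ and φ₂ are coordinate-wise monotone in the sense that φ_k(s) ≤ φ_k(s') whenever s_i ≤ s'_i for all i ∈ P and s_i ≥ s'_i for all i ∈ 𝒩 (k = 1, 2). Then: (i) if a non-singular pair (θ, t) is feasible for the DMO problem, the triple (θ, r(θ,t), t) is feasible for the hinge reformulation HNG′; and (ii) if a triple (θ, s, t) with (θ, t) non-singular is feasible for HNG′, then (θ, t) is feasible for the DMO problem. -/

import Mathlib

/-! For `a ≠ t` and `s ∈ [0,1]` the hinge function collapses to `H_t(a,s) = min(s, t - a)` when
`a < t` and to `max(s - 1, t - a)` when `a > t`. Hence, at a non-singular `(θ,t)`, the hinge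
constraints of HNG′ say exactly `s_i ≤ r(θ,t)_i` on `P` and `s_i ≥ r(θ,t)_i` on `𝒩` (the
indicator reformulation IND′). The vector `r(θ,t)` satisfies these with equality, and any
feasible `s` is below `r(θ,t)` in the order for which `φ₂` is monotone, so `φ₂(s) ≥ α` forces
`φ₂(r(θ,t)) ≥ α`. -/

open Finset

/-- The indicator `𝟙{a > t}` as a real number. -/
noncomputable def indi (a t : ℝ) : ℝ := if a > t then 1 else 0

/-- `H_t(a,s) = s + [s+a−1−t]₊ − [s+a−t]₊`. -/
noncomputable def hng (t a s : ℝ) : ℝ := s + max (s + a - 1 - t) 0 - max (s + a - t) 0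

/-- The predicted label vector `r(θ,t)_i = 𝟙{F θ i > t}`. -/
noncomputable def rvec {Θ I : Type*} (F : Θ → I → ℝ) (θ : Θ) (t : ℝ) (i : I) : ℝ :=
  indi (F θ i) t

/-- `(θ,t)` is non-singular if `F θ i ≠ t` for all `i`. -/
def NonSingular {Θ I : Type*} (F : Θ → I → ℝ) (θ : Θ) (t : ℝ) : Prop := ∀ i, F θ i ≠ t

/-- `(θ,t)` is feasible for the DMO problem: `t ∈ [0,1]` and `φ₂(r(θ,t)) ≥ α`. -/
def DMOFeasible {Θ I : Type*} (φ₂ : (I → ℝ) → ℝ) (α : ℝ) (F : Θ → I → ℝ)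
    (θ : Θ) (t : ℝ) : Prop :=
  t ∈ Set.Icc (0 : ℝ) 1 ∧ φ₂ (rvec F θ t) ≥ α

/-- `(θ,s,t)` is feasible for the indicator reformulation IND′. -/
def INDFeasible {Θ I : Type*} (P N : Finset I) (φ₂ : (I → ℝ) → ℝ) (α : ℝ)
    (F : Θ → I → ℝ) (θ : Θ) (s : I → ℝ) (t : ℝ) : Prop :=
  (∀ i, s i ∈ Set.Icc (0 : ℝ) 1) ∧ t ∈ Set.Icc (0 : ℝ) 1 ∧
  φ₂ s ≥ α ∧
  (∀ i ∈ P, s i ≤ indi (F θ i) t) ∧ (∀ i ∈ N, indi (F θ i) t ≤ s i)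

/-- `(θ,s,t)` is feasible for the hinge reformulation HNG′. -/
def HNGFeasible {Θ I : Type*} (P N : Finset I) (φ₂ : (I → ℝ) → ℝ) (α : ℝ)
    (F : Θ → I → ℝ) (θ : Θ) (s : I → ℝ) (t : ℝ) : Prop :=
  (∀ i, s i ∈ Set.Icc (0 : ℝ) 1) ∧ t ∈ Set.Icc (0 : ℝ) 1 ∧
  φ₂ s ≥ α ∧
  (∀ i ∈ P, hng t (F θ i) (s i) ≤ 0) ∧ (∀ i ∈ N, 0 ≤ hng t (F θ i) (s i))

/-- `φ` is coordinate-wise monotone: nondecreasing in coordinates in `P` and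
nonincreasing in coordinates in `N`, over `[0,1]^I`. -/
def CoordMonotone {I : Type*} (P N : Finset I) (φ : (I → ℝ) → ℝ) : Prop :=
  ∀ s s' : I → ℝ, (∀ i, s i ∈ Set.Icc (0 : ℝ) 1) → (∀ i, s' i ∈ Set.Icc (0 : ℝ) 1) →
    (∀ i ∈ P, s i ≤ s' i) → (∀ i ∈ N, s' i ≤ s i) → φ s ≤ φ s'

theorem indi_mem_Icc (a t : ℝ) : indi a t ∈ Set.Icc (0 : ℝ) 1 := by
  unfold indi; split_ifs <;> norm_num

section Hinge

variable {t a s : ℝ}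

theorem hng_of_lt (h : a < t) (hs : s ≤ 1) : hng t a s = min s (t - a) := by
  unfold hng
  rw [max_eq_right (by linarith), max_def, min_def]
  split_ifs <;> linarith

theorem hng_of_gt (h : t < a) (hs : 0 ≤ s) : hng t a s = max (s - 1) (t - a) := by
  unfold hng
  rw [max_eq_left (by linarith : 0 ≤ s + a - t), max_def, max_def]
  split_ifs <;> linarith

theorem hng_nonpos_iff (hne : a ≠ t) (hs : s ∈ Set.Icc (0 : ℝ) 1) :
    hng t a s ≤ 0 ↔ s ≤ indi a t := by
  rcases hne.lt_or_gt with h | h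
  · rw [hng_of_lt h hs.2, indi, if_neg h.not_gt, min_le_iff]
    exact ⟨fun h' => h'.resolve_right (by linarith), Or.inl⟩
  · rw [hng_of_gt h hs.1, indi, if_pos h, max_le_iff]
    exact iff_of_true ⟨by linarith [hs.2], by linarith⟩ hs.2

theorem hng_nonneg_iff (hne : a ≠ t) (hs : s ∈ Set.Icc (0 : ℝ) 1) :
    0 ≤ hng t a s ↔ indi a t ≤ s := by
  rcases hne.lt_or_gt with h | h
  · rw [hng_of_lt h hs.2, indi, if_neg h.not_gt, le_min_iff]
    exact iff_of_true ⟨hs.1, by linarith⟩ hs.1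
  · rw [hng_of_gt h hs.1, indi, if_pos h, le_max_iff]
    exact ⟨fun h' => h'.elim (fun _ => by linarith) (fun _ => by linarith),
      fun _ => Or.inl (by linarith)⟩

end Hinge

section Feasibility

variable {Θ I : Type*} {P N : Finset I} {φ₂ : (I → ℝ) → ℝ} {α : ℝ} {F : Θ → I → ℝ}
  {θ : Θ} {s : I → ℝ} {t : ℝ}

theorem hngFeasible_iff_indFeasible (hns : NonSingular F θ t) :
    HNGFeasible P N φ₂ α F θ s t ↔ INDFeasible P N φ₂ α F θ s t := by
  unfold HNGFeasible INDFeasible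
  refine and_congr_right fun hs => and_congr_right fun _ => and_congr_right fun _ => ?_
  exact and_congr (forall₂_congr fun i _ => hng_nonpos_iff (hns i) (hs i))
    (forall₂_congr fun i _ => hng_nonneg_iff (hns i) (hs i))

theorem DMOFeasible.indFeasible_rvec (h : DMOFeasible φ₂ α F θ t) :
    INDFeasible P N φ₂ α F θ (rvec F θ t) t :=
  ⟨fun _ => indi_mem_Icc _ _, h.1, h.2, fun _ _ => le_rfl, fun _ _ => le_rfl⟩

theorem INDFeasible.dmoFeasible (hmono : CoordMonotone P N φ₂)
    (h : INDFeasible P N φ₂ α F θ s t) : DMOFeasible φ₂ α F θ t :=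
  let ⟨hs, ht, hφ, hP, hN⟩ := h
  ⟨ht, hφ.trans (hmono s _ hs (fun _ => indi_mem_Icc _ _) hP hN)⟩

end Feasibility

theorem stmt_16_general {Θ I : Type*} (P N : Finset I)
    (φ₂ : (I → ℝ) → ℝ) (α : ℝ)
    (hmono2 : CoordMonotone P N φ₂)
    (F : Θ → I → ℝ) :
    (∀ (θ : Θ) (t : ℝ), NonSingular F θ t → DMOFeasible φ₂ α F θ t →
      HNGFeasible P N φ₂ α F θ (rvec F θ t) t)
    ∧
    (∀ (θ : Θ) (s : I → ℝ) (t : ℝ), NonSingular F θ t →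
      HNGFeasible P N φ₂ α F θ s t → DMOFeasible φ₂ α F θ t) :=
  ⟨fun _ _ hns h => (hngFeasible_iff_indFeasible hns).2 h.indFeasible_rvec,
    fun _ _ _ hns h => ((hngFeasible_iff_indFeasible hns).1 h).dmoFeasible hmono2⟩

/-- Suppose `φ₁, φ₂` are coordinate-wise monotone. Then:
(i) if a non-singular pair `(θ,t)` is feasible for the DMO problem, the triple
`(θ, r(θ,t), t)` is feasible for the hinge reformulation HNG′; and
(ii) if a triple `(θ,s,t)` with `(θ,t)` non-singular is feasible for HNG′, then
`(θ,t)` is feasible for the DMO problem. -/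
theorem stmt_16 {Θ I : Type*} [Fintype I] [DecidableEq I] (P N : Finset I)
    (hPN : P ∪ N = Finset.univ) (hdisj : Disjoint P N)
    (φ₁ φ₂ : (I → ℝ) → ℝ) (α : ℝ)
    (hmono1 : CoordMonotone P N φ₁) (hmono2 : CoordMonotone P N φ₂)
    (F : Θ → I → ℝ) (hF : ∀ θ i, F θ i ∈ Set.Icc (0 : ℝ) 1) :
    (∀ (θ : Θ) (t : ℝ), NonSingular F θ t → DMOFeasible φ₂ α F θ t →
      HNGFeasible P N φ₂ α F θ (rvec F θ t) t)
    ∧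
    (∀ (θ : Θ) (s : I → ℝ) (t : ℝ), NonSingular F θ t →
      HNGFeasible P N φ₂ α F θ s t → DMOFeasible φ₂ α F θ t) :=
  stmt_16_general P N φ₂ α hmono2 F
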